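/- arXiv:1103.1786 — 3 statements merged into one kernel-verified Lean document; each statement's English description precedes it below -/
import Mathlib

section
/- Let R ⊆ S be an integral extension of integral domains with S contained in the fraction field of R (e.g., S the integral closure of R in its fraction field), and let I be an ideal of R. Then every element of (IS) ∩ R lies in the integral closure of the ideal I in R. -/
/-!
If `algebraMap R S x ∈ IS` with `S` integral over `R`, Cayley–Hamilton (in the strong form of
Matsumura 2.1, available as `Polynomial.exists_monic_aeval_eq_zero_forall_mem_pow_of_mem_map`)
gives a monic `p ∈ R[X]` of degree `n` with `p(x) = 0` in `S` and `coeff p k ∈ I ^ (n - k)`.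
As `R → S` is injective, `p(x) = 0` already in `R`, which is the integral dependence equation.
-/

def IsIntegralOverIdeal {R : Type*} [CommRing R] (I : Ideal R) (x : R) : Prop :=
  ∃ n : ℕ, 0 < n ∧ ∃ a : ℕ → R, (∀ i ∈ Finset.Icc 1 n, a i ∈ I ^ i) ∧
    x ^ n + ∑ i ∈ Finset.Icc 1 n, a i * x ^ (n - i) = 0

open Polynomial

section

variable {R : Type*} [CommRing R]

theorem Finset.sum_Icc_one_sub_eq_sum_range {M : Type*} [AddCommMonoid M] (n : ℕ) (f : ℕ → M) :
    ∑ i ∈ Finset.Icc 1 n, f (n - i) = ∑ k ∈ Finset.range n, f k :=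
  Finset.sum_nbij' (n - ·) (n - ·)
    (fun i hi => by simp only [Finset.mem_Icc, Finset.mem_range] at hi ⊢; omega)
    (fun k hk => by simp only [Finset.mem_Icc, Finset.mem_range] at hk ⊢; omega)
    (fun i hi => by simp only [Finset.mem_Icc] at hi; omega)
    (fun k hk => by simp only [Finset.mem_range] at hk; omega)
    (fun _ _ => rfl)

theorem Polynomial.Monic.eval_eq_pow_add_sum_Icc {p : R[X]} (hp : p.Monic) (x : R) :
    p.eval x = x ^ p.natDegree +
      ∑ i ∈ Finset.Icc 1 p.natDegree, p.coeff (p.natDegree - i) * x ^ (p.natDegree - i) := by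
  rw [Finset.sum_Icc_one_sub_eq_sum_range (f := fun k => p.coeff k * x ^ k), eval_eq_sum_range,
    Finset.sum_range_succ, hp.coeff_natDegree, one_mul, add_comm]

theorem IsIntegralOverIdeal.of_monic {I : Ideal R} {x : R} {p : R[X]} (hp : p.Monic)
    (hpx : p.eval x = 0) (hcoeff : ∀ k, p.coeff k ∈ I ^ (p.natDegree - k)) :
    IsIntegralOverIdeal I x := by
  rcases subsingleton_or_nontrivial R with _ | _
  · exact ⟨1, one_pos, 0, by simp, Subsingleton.elim _ _⟩
  have hdeg : 0 < p.natDegree := by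
    by_contra! h
    rw [hp.natDegree_eq_zero.mp (Nat.le_zero.mp h), eval_one] at hpx
    exact one_ne_zero hpx
  refine ⟨p.natDegree, hdeg, fun i => p.coeff (p.natDegree - i), fun i hi => ?_,
    (hp.eval_eq_pow_add_sum_Icc x).symm.trans hpx⟩
  simpa [Nat.sub_sub_self (Finset.mem_Icc.mp hi).2] using hcoeff (p.natDegree - i)

theorem isIntegralOverIdeal_of_algebraMap_mem_map {A : Type*} [CommRing A] [Algebra R A]
    [Algebra.IsIntegral R A] (hinj : Function.Injective (algebraMap R A)) {I : Ideal R} {x : R}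
    (hx : algebraMap R A x ∈ I.map (algebraMap R A)) : IsIntegralOverIdeal I x := by
  obtain ⟨p, hp, hpx, hcoeff⟩ := exists_monic_aeval_eq_zero_forall_mem_pow_of_mem_map hx
  refine IsIntegralOverIdeal.of_monic hp (hinj ?_) hcoeff
  rwa [map_zero, ← aeval_algebraMap_apply_eq_algebraMap_eval]

end

/-- If `S` is a subring of the fraction field of `R` which is integral over
`R`, and `I` an ideal of `R`, then every element of `IS ∩ R` is integral over `I`. -/
theorem stmt_4 {R : Type*} [CommRing R] [IsDomain R]
    (S : Subalgebra R (FractionRing R)) (hS : ∀ s : S, IsIntegral R (s : FractionRing R))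
    (I : Ideal R) (x : R)
    (hx : (⟨algebraMap R (FractionRing R) x, Subalgebra.algebraMap_mem S x⟩ : S) ∈
      I.map (algebraMap R S)) :
    IsIntegralOverIdeal I x := by
  have : Algebra.IsIntegral R S :=
    ⟨fun s => (isIntegral_algHom_iff S.val Subtype.val_injective).mp (hS s)⟩
  have hinj : Function.Injective (algebraMap R S) := fun a b hab =>
    IsFractionRing.injective R (FractionRing R) (congrArg Subtype.val hab)
  exact isIntegralOverIdeal_of_algebraMap_mem_map hinj hx
end

section
/- Let (R, m) be a regular local ring of dimension d with regular system of parameters x₁, …, x_d. Then the annihilator of the paraclass 1/(x₁⋯x_d) ∈ H^d_m(R) is exactly the ideal (x₁, …, x_d) = m; equivalently, for r ∈ R, there exist t ≥ 0 and bᵢ ∈ R with r(x₁⋯x_d)^t = Σᵢ bᵢ xᵢ^{t+1} if and only if r ∈ m. -/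
/-!
If `y` is a nonzerodivisor modulo `J`, then `s y^t ∈ J + (y^{t+1})` forces `s ∈ J + (y)`.
Peeling off the `xᵢ` one at a time, this gives `(x₁^{t+1}, …, x_d^{t+1}) : (x₁⋯x_d)^t ⊆ m`,
provided each `xᵢ` is a nonzerodivisor modulo `(x_j^{t+1})_{j ∈ S} + (x_j)_{j ∈ T}` for
disjoint `S, T` not containing `i`. This holds because a regular sequence in a Noetherian
local ring stays regular after permuting it and after raising its members to powers; the
latter comes from the exact sequences `0 → R/(a^n) --a--> R/(a^{n+1}) → R/(a) → 0`.
-/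

open Ideal

section

variable {R : Type*} [CommRing R]

section NonZeroDivisorMod

variable {I : Ideal R} {a : R}

lemma mul_mem_span_pow_succ_sup_iff (ha : ∀ r, a * r ∈ I → r ∈ I) (n : ℕ) (s : R) :
    a * s ∈ span {a ^ (n + 1)} ⊔ I ↔ s ∈ span {a ^ n} ⊔ I := by
  simp only [mem_span_singleton_sup]
  constructor
  · rintro ⟨c, i, hi, he⟩
    exact ⟨c, s - c * a ^ n, ha _ (by convert hi using 1; linear_combination -he), by ring⟩
  · rintro ⟨c, i, hi, rfl⟩
    exact ⟨c, a * i, I.mul_mem_left a hi, by ring⟩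

lemma mul_pow_mem_span_pow_add_sup_iff (ha : ∀ r, a * r ∈ I → r ∈ I) (n : ℕ) :
    ∀ (t : ℕ) (s : R), s * a ^ t ∈ span {a ^ (t + n)} ⊔ I ↔ s ∈ span {a ^ n} ⊔ I
  | 0, s => by simp
  | t + 1, s => by
    rw [add_right_comm, pow_succ a t, ← mul_assoc, mul_comm (s * a ^ t) a]
    exact (mul_mem_span_pow_succ_sup_iff ha _ _).trans
      (mul_pow_mem_span_pow_add_sup_iff ha n t s)

lemma mem_of_pow_mul_mem (ha : ∀ r, a * r ∈ I → r ∈ I) (n : ℕ) (r : R)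
    (hr : a ^ n * r ∈ I) : r ∈ I := by
  induction n generalizing r with
  | zero => simpa using hr
  | succ n ih => exact ih r (ha _ (by rwa [← mul_assoc, ← pow_succ']))

end NonZeroDivisorMod

/-- `RingTheory.Sequence.IsWeaklyRegular (R ⧸ I)`, phrased with ideals of `R` so that
inductions can change `I`. -/
def IsWeaklyRegularMod (I : Ideal R) : List R → Prop
  | [] => True
  | a :: l => (∀ r, a * r ∈ I → r ∈ I) ∧ IsWeaklyRegularMod (span {a} ⊔ I) l

namespace IsWeaklyRegularMod

lemma top : ∀ l : List R, IsWeaklyRegularMod ⊤ l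
  | [] => trivial
  | _ :: l => ⟨fun _ _ => Submodule.mem_top, by rw [sup_top_eq]; exact top l⟩

lemma of_append : ∀ {I : Ideal R} {p q : List R},
    IsWeaklyRegularMod I (p ++ q) → IsWeaklyRegularMod (ofList p ⊔ I) q
  | _, [], _, h => by simpa using h
  | _, _ :: _, _, h => by rw [ofList_cons, sup_assoc, sup_left_comm]; exact of_append h.2

/-- Weak regularity passes to the middle term of `0 → R/M --a--> R/K → R/(a, K) → 0`. -/
lemma of_colon : ∀ {K M : Ideal R} {a : R} (l : List R), (∀ s, a * s ∈ K ↔ s ∈ M) →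
    IsWeaklyRegularMod M l → IsWeaklyRegularMod (span {a} ⊔ K) l → IsWeaklyRegularMod K l
  | _, _, _, [], _, _, _ => trivial
  | K, M, a, z :: w, hKM, ⟨hzM, hM⟩, ⟨hzL, hL⟩ => by
    have hz : ∀ r, z * r ∈ K → r ∈ K := by
      intro r hr
      obtain ⟨c, k, hk, rfl⟩ := mem_span_singleton_sup.mp (hzL r (Submodule.mem_sup_right hr))
      have hc : c ∈ M := hzM c <| (hKM _).mp <| by
        convert K.sub_mem hr (K.mul_mem_left z hk) using 1; ring
      exact K.add_mem (by simpa [mul_comm] using (hKM c).mpr hc) hk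
    have hcolon : ∀ s, a * s ∈ span {z} ⊔ K ↔ s ∈ span {z} ⊔ M := by
      intro s
      constructor
      · intro h
        obtain ⟨e, k, hk, he⟩ := mem_span_singleton_sup.mp h
        have hze : z * e ∈ span {a} ⊔ K :=
          mem_span_singleton_sup.mpr ⟨s, -k, K.neg_mem hk, by linear_combination -he⟩
        obtain ⟨g, k', hk', rfl⟩ := mem_span_singleton_sup.mp (hzL e hze)
        have hsM : s - g * z ∈ M := (hKM _).mp <| by
          convert K.add_mem (K.mul_mem_left z hk') hk using 1; linear_combination -he
        exact mem_span_singleton_sup.mpr ⟨g, _, hsM, by ring⟩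
      · intro h
        obtain ⟨c, m, hm, rfl⟩ := mem_span_singleton_sup.mp h
        exact mem_span_singleton_sup.mpr ⟨a * c, a * m, (hKM m).mpr hm, by ring⟩
    exact ⟨hz, of_colon w hcolon hM (by rwa [sup_left_comm])⟩

lemma pow_cons {I : Ideal R} {a : R} {l : List R} (h : IsWeaklyRegularMod I (a :: l))
    (n : ℕ) : IsWeaklyRegularMod I (a ^ n :: l) := by
  refine ⟨mem_of_pow_mul_mem h.1 n, ?_⟩
  induction n with
  | zero => simpa using top l
  | succ n ih =>
    refine of_colon l (mul_mem_span_pow_succ_sup_iff h.1 n) ih ?_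
    rw [← sup_assoc, sup_eq_left.mpr (span_singleton_le_span_singleton.mpr
      (dvd_pow_self a n.succ_ne_zero))]
    exact h.2

lemma map_pow_append (k : ℕ) : ∀ {I : Ideal R} {p q : List R},
    IsWeaklyRegularMod I (p ++ q) → IsWeaklyRegularMod I (p.map (· ^ k) ++ q)
  | _, [], _, h => h
  | _, _ :: _, _, h => ⟨(pow_cons h k).1, map_pow_append k (pow_cons h k).2⟩

end IsWeaklyRegularMod

lemma isWeaklyRegularMod_ofList : ∀ (p : List R) {l : List R},
    RingTheory.Sequence.IsWeaklyRegular R (p ++ l) → IsWeaklyRegularMod (ofList p) l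
  | _, [], _ => trivial
  | p, a :: l, h => by
    refine ⟨fun r hr => ?_, ?_⟩
    · have hreg := h.regular_mod_prev p.length (by simp)
      simpa using mem_of_isSMulRegular_quotient_of_smul_mem hreg (x := r) (by simpa using hr)
    · simpa [sup_comm] using isWeaklyRegularMod_ofList (p ++ [a]) (l := l) (by simpa using h)

theorem mem_ofList_sup_of_mul_prod_pow_mem {t : ℕ} : ∀ {I : Ideal R} {z : List R},
    (∀ l, l.Perm z → IsWeaklyRegularMod I l) → ∀ {r : R},
    r * z.prod ^ t ∈ ofList (z.map (· ^ (t + 1))) ⊔ I → r ∈ ofList z ⊔ I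
  | _, [], _, _, hr => by simpa using hr
  | I, y :: w, H, r, hr => by
    set J := ofList (w.map (· ^ (t + 1))) ⊔ I
    have hy : ∀ s, y * s ∈ J → s ∈ J :=
      ((H _ (List.perm_append_singleton y w)).map_pow_append (t + 1)).of_append.1
    have hry : r * w.prod ^ t * y ^ t ∈ span {y ^ (t + 1)} ⊔ J := by
      rw [← sup_assoc]
      convert hr using 1
      · simp
      · rw [List.prod_cons, mul_pow]; ring
    have hrw := (mul_pow_mem_span_pow_add_sup_iff hy 1 t _).mp hry
    rw [pow_one, sup_left_comm] at hrw
    have := mem_ofList_sup_of_mul_prod_pow_mem (fun l hl => (H (y :: l) (hl.cons y)).2) hrw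
    rwa [ofList_cons, sup_assoc, sup_left_comm]

lemma ofList_ofFn {d : ℕ} (x : Fin d → R) : ofList (List.ofFn x) = span (Set.range x) :=
  congrArg span (Set.ext fun a => List.mem_ofFn' x a)

end

/-- In a regular local ring of dimension `d` with regular system of
parameters `x₁,…,x_d`, the annihilator of the paraclass `1/(x₁⋯x_d)` is exactly the
maximal ideal `(x₁,…,x_d)`: `r(x₁⋯x_d)^t ∈ (x₁^{t+1},…,x_d^{t+1})` for some `t` iff
`r ∈ m`. -/
theorem stmt_9 {R : Type*} [CommRing R] [IsNoetherianRing R] [IsLocalRing R] {d : ℕ}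
    (x : Fin d → R) (hreg : RingTheory.Sequence.IsRegular R (List.ofFn x))
    (hspan : Ideal.span (Set.range x) = IsLocalRing.maximalIdeal R) (r : R) :
    (∃ (t : ℕ) (b : Fin d → R), r * (∏ i, x i) ^ t = ∑ i, b i * x i ^ (t + 1)) ↔
      r ∈ IsLocalRing.maximalIdeal R := by
  constructor
  · rintro ⟨t, b, hb⟩
    have hxm : ∀ a ∈ List.ofFn x, a ∈ IsLocalRing.maximalIdeal R := fun a ha => by
      rw [← hspan, ← ofList_ofFn]; exact subset_span ha
    have hperm (l : List R) (hl : l.Perm (List.ofFn x)) : IsWeaklyRegularMod ⊥ l := by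
      simpa using isWeaklyRegularMod_ofList [] <|
        IsLocalRing.isWeaklyRegular_of_perm_of_subset_maximalIdeal hreg.toIsWeaklyRegular
          hl.symm hxm
    have hmem :
        r * (List.ofFn x).prod ^ t ∈ ofList ((List.ofFn x).map (· ^ (t + 1))) ⊔ ⊥ := by
      rw [List.prod_ofFn, hb, List.map_ofFn, ofList_ofFn, sup_bot_eq]
      exact mem_span_range_iff_exists_fun.mpr ⟨b, rfl⟩
    simpa [ofList_ofFn, hspan] using mem_ofList_sup_of_mul_prod_pow_mem hperm hmem
  · intro hr
    obtain ⟨c, hc⟩ := mem_span_range_iff_exists_fun.mp (hspan ▸ hr)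
    exact ⟨0, c, by simpa using hc.symm⟩
end

section
/- Let S be an integral domain that is integral over a complete noetherian local ring (R, m). Then S has a unique maximal ideal lying over m; in particular if S is module-finite over R, then S is a complete local ring. -/
/-!
A module-finite algebra over a noetherian `I`-adically complete ring is again `I`-adically
complete, hence Henselian along `I`. If moreover `R ⧸ I` is artinian (e.g. `I` is the maximal
ideal of a local ring), two distinct maximal ideals of a finite extension domain `A` would be
separated by an idempotent of the artinian ring `A ⧸ IA`; Hensel's lemma for `X² - X` lifts it
to an idempotent of `A`, which must be `0` or `1`, a contradiction. An integral extension domain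
`S` is the union of its finite subalgebras `R[s]`, and two maximal ideals of `S` differing at `s`
would contract to two distinct maximal ideals of the local ring `R[s]`.
-/

open IsLocalRing

section

variable {R : Type*} [CommRing R] {I : Ideal R}

theorem IsPrecomplete.of_surjective {M N : Type*} [AddCommGroup M] [Module R M]
    [AddCommGroup N] [Module R N] [IsPrecomplete I M] (f : M →ₗ[R] N)
    (hf : Function.Surjective f) : IsPrecomplete I N := by
  rw [← AdicCompletion.of_surjective_iff]
  intro y
  obtain ⟨x, rfl⟩ := AdicCompletion.map_surjective I hf y
  obtain ⟨m, rfl⟩ := AdicCompletion.of_surjective I M x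
  exact ⟨f m, (AdicCompletion.map_of I f m).symm⟩

theorem IsPrecomplete.pi {ι : Type*} [Finite ι] {M : ι → Type*} [∀ i, AddCommGroup (M i)]
    [∀ i, Module R (M i)] [∀ i, IsPrecomplete I (M i)] : IsPrecomplete I (∀ i, M i) := by
  classical
  have := Fintype.ofFinite ι
  rw [← AdicCompletion.of_surjective_iff]
  intro x
  choose m hm using fun i ↦ AdicCompletion.of_surjective I (M i) (AdicCompletion.pi I M x i)
  refine ⟨m, (AdicCompletion.piEquivOfFintype I M).injective (funext fun i ↦ ?_)⟩
  rw [AdicCompletion.piEquivOfFintype_apply, AdicCompletion.piEquivOfFintype_apply, ← hm]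
  exact AdicCompletion.map_of I _ m

theorem IsPrecomplete.of_finite {M : Type*} [AddCommGroup M] [Module R M] [Module.Finite R M]
    [IsPrecomplete I R] : IsPrecomplete I M := by
  obtain ⟨n, π, hπ⟩ := Module.Finite.exists_fin' R M
  have : IsPrecomplete I (Fin n → R) := .pi
  exact .of_surjective π hπ

theorem IsAdicComplete.of_finite [IsNoetherianRing R] [IsAdicComplete I R]
    {M : Type*} [AddCommGroup M] [Module R M] [Module.Finite R M] : IsAdicComplete I M :=
  { toIsHausdorff := .of_le_jacobson I M (IsAdicComplete.le_jacobson_bot I)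
    toIsPrecomplete := .of_finite }

theorem HenselianRing.of_finite [IsNoetherianRing R] [IsAdicComplete I R]
    {A : Type*} [CommRing A] [Algebra R A] [Module.Finite R A] :
    HenselianRing A (I.map (algebraMap R A)) :=
  have : IsAdicComplete (I.map (algebraMap R A)) A :=
    (IsAdicComplete.map_algebraMap_iff I A).mpr .of_finite
  inferInstance

end

open Polynomial in
theorem HenselianRing.exists_isIdempotentElem_sub_mem {A : Type*} [CommRing A] {J : Ideal A}
    [HenselianRing A J] {a : A} (ha : a ^ 2 - a ∈ J) :
    ∃ e : A, IsIdempotentElem e ∧ e - a ∈ J := by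
  have hmonic : (X ^ 2 - X : A[X]).Monic := monic_X_pow_sub (degree_X_le.trans_lt (by norm_num))
  have hderiv : (X ^ 2 - X : A[X]).derivative.eval a = 2 * a - 1 := by
    simp only [derivative_sub, derivative_X_pow, derivative_X, eval_sub, eval_mul, eval_C,
      eval_one]
    norm_num
  -- `(2a - 1)² = 1 + 4 (a² - a)` is a unit modulo `J`
  have hunit : IsUnit (Ideal.Quotient.mk J (2 * a - 1)) := by
    refine IsUnit.of_mul_eq_one (Ideal.Quotient.mk J (2 * a - 1)) ?_
    rw [← map_mul, ← map_one (Ideal.Quotient.mk J), Ideal.Quotient.eq]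
    convert J.mul_mem_left 4 ha using 1
    ring
  obtain ⟨e, he, hea⟩ :=
    HenselianRing.is_henselian _ hmonic a (by simpa using ha) (hderiv ▸ hunit)
  refine ⟨e, ?_, hea⟩
  simpa [sq, sub_eq_zero, IsIdempotentElem] using he

theorem Ideal.exists_sq_sub_mem_of_isArtinianRing_quotient {A : Type*} [CommRing A]
    {J : Ideal A} [IsArtinianRing (A ⧸ J)] {M M' : Ideal A} [M.IsMaximal] [M'.IsMaximal]
    (hJM : J ≤ M) (hJM' : J ≤ M') (hne : M ≠ M') : ∃ a : A, a ^ 2 - a ∈ J ∧ a ∈ M ∧ a ∉ M' := by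
  have hker : RingHom.ker (Ideal.Quotient.mk J) = J := Ideal.mk_ker
  have : (M'.map (Ideal.Quotient.mk J)).IsPrime :=
    Ideal.map_isPrime_of_surjective Ideal.Quotient.mk_surjective (hker.trans_le hJM')
  obtain ⟨r, hr', hr, hrM⟩ :=
    IsArtinianRing.exists_not_mem_forall_mem_of_ne (M'.map (Ideal.Quotient.mk J))
  obtain ⟨a, rfl⟩ := Ideal.Quotient.mk_surjective r
  refine ⟨a, ?_, ?_, fun ha ↦ hr' ((Ideal.mem_quotient_iff_mem hJM').mpr ha)⟩
  · rw [← Ideal.Quotient.eq_zero_iff_mem, map_sub, map_pow, sq, hr.eq, sub_self]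
  · refine (Ideal.mem_quotient_iff_mem hJM).mp (hrM _ ?_ fun h ↦ hne ?_)
    · exact Ideal.map_isPrime_of_surjective Ideal.Quotient.mk_surjective (hker.trans_le hJM)
    · ext x
      rw [← Ideal.mem_quotient_iff_mem hJM, h, Ideal.mem_quotient_iff_mem hJM']

theorem HenselianRing.isLocalRing {A : Type*} [CommRing A] [IsDomain A] (J : Ideal A)
    [HenselianRing A J] [IsArtinianRing (A ⧸ J)] : IsLocalRing A := by
  have hJ : ∀ N : Ideal A, N.IsMaximal → J ≤ N := fun N _ ↦ HenselianRing.jac.trans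
    ((Ideal.jacobson_mono bot_le).trans_eq Ideal.jacobson_eq_self_of_isMaximal)
  refine .of_unique_max_ideal ?_
  obtain ⟨M, hM⟩ := Ideal.exists_maximal A
  refine ⟨M, hM, fun M' hM' ↦ ?_⟩
  by_contra hne
  obtain ⟨a, ha, haM', haM⟩ :=
    Ideal.exists_sq_sub_mem_of_isArtinianRing_quotient (hJ M' hM') (hJ M hM) hne
  obtain ⟨e, he, hea⟩ := HenselianRing.exists_isIdempotentElem_sub_mem ha
  rcases IsIdempotentElem.iff_eq_zero_or_one.mp he with rfl | rfl
  · exact haM (by simpa using hJ M hM hea)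
  · exact hM'.ne_top
      ((Ideal.eq_top_iff_one _).mpr (by simpa using M'.add_mem (hJ M' hM' hea) haM'))

theorem IsLocalRing.of_finite_of_isAdicComplete {R A : Type*} [CommRing R] [IsNoetherianRing R]
    (I : Ideal R) [IsAdicComplete I R] [IsArtinianRing (R ⧸ I)] [CommRing A] [IsDomain A]
    [Algebra R A] [Module.Finite R A] : IsLocalRing A :=
  have : HenselianRing A (I.map (algebraMap R A)) := .of_finite
  have : Module.Finite (R ⧸ I) (A ⧸ I.map (algebraMap R A)) :=
    Module.Finite.of_restrictScalars_finite R _ _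
  have : IsArtinianRing (A ⧸ I.map (algebraMap R A)) := .of_finite (R ⧸ I) _
  HenselianRing.isLocalRing (I.map (algebraMap R A))

theorem IsLocalRing.of_isIntegral_of_isAdicComplete {R S : Type*} [CommRing R]
    [IsNoetherianRing R] (I : Ideal R) [IsAdicComplete I R] [IsArtinianRing (R ⧸ I)]
    [CommRing S] [IsDomain S] [Algebra R S] [Algebra.IsIntegral R S] : IsLocalRing S := by
  refine .of_unique_max_ideal ?_
  obtain ⟨P, hP⟩ := Ideal.exists_maximal S
  refine ⟨P, hP, fun P' hP' ↦ ?_⟩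
  by_contra hne
  obtain ⟨s, hsP', hsP⟩ := SetLike.not_le_iff_exists.mp fun h ↦ hne (hP'.eq_of_le hP.ne_top h)
  let T := Algebra.adjoin R {s}
  have : Module.Finite R T :=
    Module.Finite.iff_fg.mpr (Algebra.IsIntegral.isIntegral s).fg_adjoin_singleton
  have : IsLocalRing T := .of_finite_of_isAdicComplete I
  have : Algebra.IsIntegral T S := .tower_top R
  have hcomap : ∀ Q : Ideal S, Q.IsMaximal → Q.comap (algebraMap T S) = maximalIdeal T :=
    fun Q _ ↦ IsLocalRing.eq_maximalIdeal (Ideal.isMaximal_comap_of_isIntegral_of_isMaximal Q)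
  have hs : (⟨s, Algebra.self_mem_adjoin_singleton R s⟩ : T) ∈ P'.comap (algebraMap T S) :=
    hsP'
  rw [hcomap P' hP', ← hcomap P hP] at hs
  exact hsP hs

theorem stmt_16_general {R S : Type*} [CommRing R] [IsNoetherianRing R] [IsLocalRing R]
    [IsAdicComplete (IsLocalRing.maximalIdeal R) R]
    [CommRing S] [IsDomain S] [Algebra R S]
    [Algebra.IsIntegral R S] :
    ∃! P : Ideal S, P.IsMaximal ∧
      Ideal.comap (algebraMap R S) P = IsLocalRing.maximalIdeal R := by
  have : IsArtinianRing (R ⧸ maximalIdeal R) := by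
    let := Ideal.Quotient.field (maximalIdeal R)
    infer_instance
  have : IsLocalRing S := .of_isIntegral_of_isAdicComplete (maximalIdeal R)
  refine ⟨maximalIdeal S, ⟨inferInstance, ?_⟩, fun P hP ↦ eq_maximalIdeal hP.1⟩
  exact eq_maximalIdeal (Ideal.isMaximal_comap_of_isIntegral_of_isMaximal _)

/-- An integral extension domain `S` of a complete noetherian local ring
`(R, 𝔪)` has a unique maximal ideal lying over `𝔪`. -/
theorem stmt_16 {R S : Type*} [CommRing R] [IsNoetherianRing R] [IsLocalRing R]
    [IsAdicComplete (IsLocalRing.maximalIdeal R) R]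
    [CommRing S] [IsDomain S] [Algebra R S]
    (hinj : Function.Injective (algebraMap R S)) [Algebra.IsIntegral R S] :
    ∃! P : Ideal S, P.IsMaximal ∧
      Ideal.comap (algebraMap R S) P = IsLocalRing.maximalIdeal R :=
  stmt_16_general
end
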